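/- (Weak duality, part (ii): equality characterization.) In the setting of weak duality — (ρ, m) ∈ C_F(ρ^a, ρ^b) and S : [0,1] → ℝ^N absolutely continuous with square-integrable derivative satisfying, for a.e. t, ∑_i Ṡ_i(t) ρ_i(t) + (1/4) ∑_{(i,j)∈E} (S_i(t) − S_j(t))² θ_ij(ρ(t)) + (1/2) ∑_{(i,j)∈E} (Σ_i − Σ_j)(S_i(t) − S_j(t)) θ_ij(ρ(t)) ẇ(t) ≤ 0 — equality ⟨S(1), ρ^b⟩ − ⟨S(0), ρ^a⟩ = A(ρ, m) holds if and only if for a.e. t ∈ [0,1]: m_ij(t) = θ_ij(ρ(t)) (S_j(t) − S_i(t)) for every (i,j) ∈ E, and ∑_i Ṡ_i(t) ρ_i(t) + (1/4) ∑_{(i,j)∈E} (S_i(t) − S_j(t))² θ_ij(ρ(t)) + (1/2) ∑_{(i,j)∈E} (Σ_i − Σ_j)(S_i(t) − S_j(t)) θ_ij(ρ(t)) ẇ(t) = 0. -/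

import Mathlib

open scoped BigOperators ENNReal
open MeasureTheory

noncomputable section

/-- Density-dependent edge weight `θ_ij(ρ) = (ρ_i + ρ_j)/2`. -/
def thetaA {N : ℕ} (ρ : Fin N → ℝ) (i j : Fin N) : ℝ := (ρ i + ρ j) / 2

/-- The cost function `L : ℝ × ℝ → [0,∞]`, `L(x,y) = y²/x` for `x > 0`,
`L(0,0) = 0`, and `L(x,y) = ∞` otherwise. -/
def Lcost (x y : ℝ) : ℝ≥0∞ :=
  if 0 < x then ENNReal.ofReal (y ^ 2 / x)
  else if x = 0 ∧ y = 0 then 0 else ⊤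

/-- Membership in the probability simplex `P(G)`. -/
def ProbVec {N : ℕ} (ρ : Fin N → ℝ) : Prop := (∀ i, 0 ≤ ρ i) ∧ ∑ i, ρ i = 1

/-- A vector field on the graph: a skew-symmetric matrix supported on edges. -/
def VecField {N : ℕ} (E : Fin N → Fin N → Prop) (m : Fin N → Fin N → ℝ) : Prop :=
  (∀ i j, m i j = - m j i) ∧ (∀ i j, ¬ E i j → m i j = 0)

/-- `w` is continuous and piecewise linear on `[0,1]` with a.e. derivative `wd`:
there is a partition `0 = t₀ < t₁ < ⋯ = 1` on whose pieces `w` is affine with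
slope `c k`, and `wd` equals `c k` on `[t_k, t_{k+1})`. -/
def IsPWL (w wd : ℝ → ℝ) : Prop :=
  ∃ (K : ℕ) (t : Fin (K + 2) → ℝ) (c : Fin (K + 1) → ℝ),
    StrictMono t ∧ t 0 = 0 ∧ t (Fin.last (K + 1)) = 1 ∧
    (∀ k : Fin (K + 1), ∀ s ∈ Set.Icc (t k.castSucc) (t k.succ),
      w s = w (t k.castSucc) + c k * (s - t k.castSucc)) ∧
    (∀ k : Fin (K + 1), ∀ s ∈ Set.Ico (t k.castSucc) (t k.succ), wd s = c k)

/-- The action `A(ρ,m) = ∫₀¹ (1/4) ∑_{(i,j)∈E} L(θ_ij(ρ(t)), m_ij(t)) dt`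
(sum over ordered pairs), valued in `[0,∞]`. -/
def action {N : ℕ} (E : Fin N → Fin N → Prop) [DecidableRel E]
    (ρ : ℝ → Fin N → ℝ) (m : ℝ → Fin N → Fin N → ℝ) : ℝ≥0∞ :=
  ∫⁻ t in Set.Icc (0 : ℝ) 1,
    (1 / 4) * ∑ i, ∑ j, (if E i j then Lcost (thetaA (ρ t) i j) (m t i j) else 0)

/-- The feasible set `C_F(ρ^a,ρ^b)` of the Wong–Zakai perturbed optimal control
problem: `ρ` is an absolutely continuous curve in `P(G)` joining `ρ^a` to `ρ^b`,
`m` is an `L²` field of skew-symmetric matrices supported on edges, and for a.e. `t`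
and all `i`: `ρ̇_i + ∑_{j∈N(i)} m_ij + ∑_{j∈N(i)} (Σ_j − Σ_i) θ_ij(ρ) ẇ = 0`
(stated in integrated form). -/
def Feasible {N : ℕ} (E : Fin N → Fin N → Prop) [DecidableRel E]
    (Sg : Fin N → ℝ) (wd : ℝ → ℝ) (ρa ρb : Fin N → ℝ)
    (ρ : ℝ → Fin N → ℝ) (m : ℝ → Fin N → Fin N → ℝ) : Prop :=
  ContinuousOn ρ (Set.Icc 0 1) ∧
  (∀ t ∈ Set.Icc (0 : ℝ) 1, ProbVec (ρ t)) ∧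
  ρ 0 = ρa ∧ ρ 1 = ρb ∧
  (∀ t, VecField E (m t)) ∧
  (∀ i j, MemLp (fun t => m t i j) 2 (volume.restrict (Set.Icc (0 : ℝ) 1))) ∧
  (∀ i, IntervalIntegrable
    (fun s => ∑ j, (if E i j then m s i j + (Sg j - Sg i) * thetaA (ρ s) i j * wd s else 0))
    volume 0 1) ∧
  (∀ i, ∀ t ∈ Set.Icc (0 : ℝ) 1,
    ρ t i = ρa i - ∫ s in (0 : ℝ)..t,
      ∑ j, (if E i j then m s i j + (Sg j - Sg i) * thetaA (ρ s) i j * wd s else 0))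

/-- `S : [0,1] → ℝ^N` is absolutely continuous with square-integrable derivative
`Sd` (stated in integrated form). -/
def AbsCtsL2 {N : ℕ} (S Sd : ℝ → Fin N → ℝ) : Prop :=
  (∀ i, MemLp (fun t => Sd t i) 2 (volume.restrict (Set.Icc (0 : ℝ) 1))) ∧
  (∀ i, IntervalIntegrable (fun t => Sd t i) volume 0 1) ∧
  (∀ i, ∀ t ∈ Set.Icc (0 : ℝ) 1, S t i = S 0 i + ∫ s in (0 : ℝ)..t, Sd s i)

/-- The Hamilton–Jacobi expression
`∑_i Ṡ_i μ_i + (1/4) ∑_{(i,j)∈E} (S_i − S_j)² θ_ij(μ)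
  + (1/2) ∑_{(i,j)∈E} (Σ_i − Σ_j)(S_i − S_j) θ_ij(μ) ẇ(t)`. -/
def hjbExpr {N : ℕ} (E : Fin N → Fin N → Prop) [DecidableRel E]
    (Sg : Fin N → ℝ) (wd : ℝ → ℝ) (S Sd : ℝ → Fin N → ℝ)
    (μ : Fin N → ℝ) (t : ℝ) : ℝ :=
  (∑ i, Sd t i * μ i)
    + (1 / 4) * ∑ i, ∑ j, (if E i j then (S t i - S t j) ^ 2 * thetaA μ i j else 0)
    + (1 / 2) *
        (∑ i, ∑ j, (if E i j then (Sg i - Sg j) * (S t i - S t j) * thetaA μ i j else 0))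
        * wd t

/-!
Along a feasible curve, `pairingRate` is the time derivative of `∑ i, S i * ρ i`, so integrating
by parts gives `∫₀¹ pairingRate = ⟨S(1), ρ^b⟩ - ⟨S(0), ρ^a⟩`. Completing the square edge by edge,
`kineticEnergy - pairingRate` equals minus the Hamilton–Jacobi expression plus the kinetic energy
of the deviation `m_ij - θ_ij (S_j - S_i)`: two nonnegative terms. Equality in weak duality says
that this nonnegative gap has integral zero, i.e. both terms vanish almost everywhere. The action
agrees with `∫ kineticEnergy` once `m_ij = 0` wherever `θ_ij = 0`, which holds a.e. on both sides
of the equivalence.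
-/

open Set

theorem intervalIntegral.integral_mul_add_mul_eq_sub_of_primitive
    {U V p q : ℝ → ℝ} {a b : ℝ}
    (hp : IntervalIntegrable p volume a b) (hq : IntervalIntegrable q volume a b)
    (hU : ∀ t ∈ uIcc a b, U t = U a + ∫ s in a..t, p s)
    (hV : ∀ t ∈ uIcc a b, V t = V a + ∫ s in a..t, q s) :
    ∫ t in a..b, (p t * V t + U t * q t) = U b * V b - U a * V a := by
  have hconst (c : ℝ) : AbsolutelyContinuousOnInterval (fun _ => c) a b := by
    simpa [AbsolutelyContinuousOnInterval] using tendsto_const_nhds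
  set U' : ℝ → ℝ := fun t => U a + ∫ s in a..t, p s
  set V' : ℝ → ℝ := fun t => V a + ∫ s in a..t, q s
  have hU' : AbsolutelyContinuousOnInterval U' a b :=
    (hconst _).fun_add (hp.absolutelyContinuousOnInterval_intervalIntegral left_mem_uIcc)
  have hV' : AbsolutelyContinuousOnInterval V' a b :=
    (hconst _).fun_add (hq.absolutelyContinuousOnInterval_intervalIntegral left_mem_uIcc)
  calc ∫ t in a..b, (p t * V t + U t * q t)
      = ∫ t in a..b, (deriv U' t * V' t + U' t * deriv V' t) := by
        refine intervalIntegral.integral_congr_ae ?_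
        filter_upwards [hp.ae_hasDerivAt_integral, hq.ae_hasDerivAt_integral] with t hpt hqt ht
        have ht' := uIoc_subset_uIcc ht
        rw [((hpt ht' a left_mem_uIcc).const_add (U a)).deriv,
          ((hqt ht' a left_mem_uIcc).const_add (V a)).deriv, hU t ht', hV t ht']
    _ = U' b * V' b - U' a * V' a := hU'.integral_deriv_mul_eq_sub hV'
    _ = U b * V b - U a * V a := by
        simp only [U', V', ← hU b right_mem_uIcc, ← hV b right_mem_uIcc,
          intervalIntegral.integral_same, add_zero]

theorem lintegral_ofReal_ne_top_and_toReal_eq_integral_iff {α : Type*} [MeasurableSpace α]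
    {μ : Measure α} {G P : α → ℝ} (hG : AEStronglyMeasurable G μ) (hG0 : 0 ≤ᵐ[μ] G)
    (hP : Integrable P μ) (hPG : P ≤ᵐ[μ] G) :
    (∫⁻ x, ENNReal.ofReal (G x) ∂μ ≠ ⊤ ∧ (∫⁻ x, ENNReal.ofReal (G x) ∂μ).toReal = ∫ x, P x ∂μ)
      ↔ G =ᵐ[μ] P := by
  constructor
  · rintro ⟨hfin, heq⟩
    have hGi : Integrable G μ := ⟨hG, (hasFiniteIntegral_iff_ofReal hG0).2 hfin.lt_top⟩
    rw [← ofReal_integral_eq_lintegral_ofReal hGi hG0,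
      ENNReal.toReal_ofReal (integral_nonneg_of_ae hG0)] at heq
    exact ((integral_eq_iff_of_ae_le hP hGi hPG).1 heq.symm).symm
  · intro hGP
    have hP0 : 0 ≤ᵐ[μ] P := by filter_upwards [hG0, hGP] with x h0 h using h ▸ h0
    rw [lintegral_congr_ae (hGP.mono fun x hx => by rw [hx]),
      ← ofReal_integral_eq_lintegral_ofReal hP hP0]
    exact ⟨ENNReal.ofReal_ne_top, ENNReal.toReal_ofReal (integral_nonneg_of_ae hP0)⟩

section EdgeSums

variable {ι : Type*} [Fintype ι] (E : ι → ι → Prop) [DecidableRel E]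

theorem sum_edges_mul_eq_half_sum_sub_mul (hE : ∀ i j, E i j ↔ E j i) (S : ι → ℝ)
    {M : ι → ι → ℝ} (hM : ∀ i j, E i j → M i j = - M j i) :
    ∑ i, ∑ j, (if E i j then S i * M i j else 0)
      = (1 / 2) * ∑ i, ∑ j, (if E i j then (S i - S j) * M i j else 0) := by
  have hswap : ∑ i, ∑ j, (if E i j then S i * M i j else 0)
      = ∑ i, ∑ j, (if E i j then - (S j * M i j) else 0) := by
    rw [Finset.sum_comm]
    refine Finset.sum_congr rfl fun i _ => Finset.sum_congr rfl fun j _ => ?_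
    by_cases h : E j i
    · rw [if_pos h, if_pos ((hE j i).mp h), hM j i h, mul_neg]
    · rw [if_neg h, if_neg (mt (hE i j).mp h)]
  have hsplit : ∑ i, ∑ j, (if E i j then (S i - S j) * M i j else 0)
      = ∑ i, ∑ j, (if E i j then S i * M i j else 0)
        + ∑ i, ∑ j, (if E i j then - (S j * M i j) else 0) := by
    simp only [← Finset.sum_add_distrib]
    refine Finset.sum_congr rfl fun i _ => Finset.sum_congr rfl fun j _ => ?_
    split_ifs <;> ring
  rw [hsplit, ← hswap]
  ring

end EdgeSums

section Graph

variable {N : ℕ} (E : Fin N → Fin N → Prop)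

def FluxSupported (μ : Fin N → ℝ) (mv : Fin N → Fin N → ℝ) : Prop :=
  ∀ i j, E i j → thetaA μ i j = 0 → mv i j = 0

variable {E}

theorem thetaA_nonneg {μ : Fin N → ℝ} (hμ : ∀ i, 0 ≤ μ i) (i j : Fin N) :
    0 ≤ thetaA μ i j :=
  div_nonneg (add_nonneg (hμ i) (hμ j)) zero_le_two

theorem FluxSupported.of_eq_thetaA_mul {μ : Fin N → ℝ} {mv : Fin N → Fin N → ℝ}
    {φ : Fin N → ℝ} (h : ∀ i j, E i j → mv i j = thetaA μ i j * (φ j - φ i)) :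
    FluxSupported E μ mv := fun i j hij hzero => by rw [h i j hij, hzero, zero_mul]

theorem Lcost_eq_ofReal {x y : ℝ} (hx : 0 ≤ x) (hy : x = 0 → y = 0) :
    Lcost x y = ENNReal.ofReal (y ^ 2 / x) := by
  rcases hx.lt_or_eq with hpos | hzero
  · rw [Lcost, if_pos hpos]
  · subst hzero
    simp [Lcost, hy rfl]

theorem Lcost_zero_left {y : ℝ} (hy : y ≠ 0) : Lcost 0 y = ⊤ := by
  simp [Lcost, hy]

theorem measurable_Lcost : Measurable fun p : ℝ × ℝ => Lcost p.1 p.2 := by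
  refine Measurable.ite (measurableSet_lt measurable_const measurable_fst)
    ((measurable_snd.pow_const 2).div measurable_fst).ennreal_ofReal
    (Measurable.ite ?_ measurable_const measurable_const)
  exact (measurableSet_singleton 0).preimage measurable_fst |>.inter
    ((measurableSet_singleton 0).preimage measurable_snd)

end Graph

section Pointwise

variable {N : ℕ} (E : Fin N → Fin N → Prop) [DecidableRel E]

def netOutflow (Sg : Fin N → ℝ) (wdt : ℝ) (μ : Fin N → ℝ) (mv : Fin N → Fin N → ℝ)
    (i : Fin N) : ℝ :=
  ∑ j, if E i j then mv i j + (Sg j - Sg i) * thetaA μ i j * wdt else 0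

def pairingRate (Sg : Fin N → ℝ) (wd : ℝ → ℝ) (S Sd : ℝ → Fin N → ℝ)
    (μ : Fin N → ℝ) (mv : Fin N → Fin N → ℝ) (t : ℝ) : ℝ :=
  ∑ i, (Sd t i * μ i - S t i * netOutflow E Sg (wd t) μ mv i)

/-- Since `x / 0 = 0`, this agrees with the integrand of `action` only under `FluxSupported`. -/
def kineticEnergy (μ : Fin N → ℝ) (mv : Fin N → Fin N → ℝ) : ℝ :=
  (1 / 4) * ∑ i, ∑ j, if E i j then mv i j ^ 2 / thetaA μ i j else 0

variable {E}

theorem kineticEnergy_term_nonneg {μ : Fin N → ℝ} (hμ : ∀ i, 0 ≤ μ i)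
    (v : Fin N → Fin N → ℝ) (i j : Fin N) :
    0 ≤ if E i j then v i j ^ 2 / thetaA μ i j else 0 := by
  split_ifs
  exacts [div_nonneg (sq_nonneg _) (thetaA_nonneg hμ i j), le_rfl]

theorem kineticEnergy_nonneg {μ : Fin N → ℝ} (hμ : ∀ i, 0 ≤ μ i) (v : Fin N → Fin N → ℝ) :
    0 ≤ kineticEnergy E μ v :=
  mul_nonneg (by norm_num) <| Finset.sum_nonneg fun i _ =>
    Finset.sum_nonneg fun j _ => kineticEnergy_term_nonneg hμ v i j

theorem kineticEnergy_eq_zero_iff {μ : Fin N → ℝ} (hμ : ∀ i, 0 ≤ μ i) (v : Fin N → Fin N → ℝ) :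
    kineticEnergy E μ v = 0 ↔ ∀ i j, E i j → 0 < thetaA μ i j → v i j = 0 := by
  rw [kineticEnergy, mul_eq_zero, or_iff_right (by norm_num),
    Finset.sum_eq_zero_iff_of_nonneg fun i _ =>
      Finset.sum_nonneg fun j _ => kineticEnergy_term_nonneg hμ v i j]
  simp only [Finset.mem_univ, true_implies,
    Finset.sum_eq_zero_iff_of_nonneg fun j _ => kineticEnergy_term_nonneg hμ v _ j]
  refine forall₂_congr fun i j => ?_
  by_cases h : E i j
  · simp only [h, if_true, true_implies, div_eq_zero_iff, pow_eq_zero_iff two_ne_zero]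
    exact ⟨fun h0 hpos => h0.resolve_right hpos.ne', fun h0 =>
      (thetaA_nonneg hμ i j).lt_or_eq.imp h0 Eq.symm⟩
  · simp [h]

theorem kineticEnergy_sub_pairingRate (hE : ∀ i j, E i j ↔ E j i) (Sg : Fin N → ℝ)
    (wd : ℝ → ℝ) (S Sd : ℝ → Fin N → ℝ) (t : ℝ) {μ : Fin N → ℝ} {mv : Fin N → Fin N → ℝ}
    (hskew : ∀ i j, mv i j = - mv j i) (hmv : FluxSupported E μ mv) :
    kineticEnergy E μ mv - pairingRate E Sg wd S Sd μ mv t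
      = - hjbExpr E Sg wd S Sd μ t
        + kineticEnergy E μ (fun i j => mv i j + thetaA μ i j * (S t i - S t j)) := by
  have hpair : pairingRate E Sg wd S Sd μ mv t
      = (∑ i, Sd t i * μ i)
        - ((∑ i, ∑ j, (if E i j then S t i * mv i j else 0))
          + ∑ i, ∑ j, (if E i j then S t i * ((Sg j - Sg i) * thetaA μ i j * wd t) else 0)) := by
    rw [pairingRate, Finset.sum_sub_distrib, ← Finset.sum_add_distrib]
    congr 1
    refine Finset.sum_congr rfl fun i _ => ?_
    rw [netOutflow, Finset.mul_sum, ← Finset.sum_add_distrib]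
    refine Finset.sum_congr rfl fun j _ => ?_
    split_ifs <;> ring
  have hflux := sum_edges_mul_eq_half_sum_sub_mul E hE (S t) fun i j _ => hskew i j
  have hnoise := sum_edges_mul_eq_half_sum_sub_mul E hE (S t)
    (M := fun i j => (Sg j - Sg i) * thetaA μ i j * wd t) fun i j _ => by
      simp only [thetaA]; ring
  have hnoise' : ∑ i, ∑ j, (if E i j then (S t i - S t j) *
        ((Sg j - Sg i) * thetaA μ i j * wd t) else 0)
      = -((∑ i, ∑ j, (if E i j then (Sg i - Sg j) * (S t i - S t j) * thetaA μ i j else 0))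
          * wd t) := by
    simp only [Finset.sum_mul, ← Finset.sum_neg_distrib]
    refine Finset.sum_congr rfl fun i _ => Finset.sum_congr rfl fun j _ => ?_
    split_ifs <;> ring
  have hsquare : ∑ i, ∑ j, (if E i j then
        (mv i j + thetaA μ i j * (S t i - S t j)) ^ 2 / thetaA μ i j else 0)
      = (∑ i, ∑ j, (if E i j then mv i j ^ 2 / thetaA μ i j else 0))
        + 2 * (∑ i, ∑ j, (if E i j then (S t i - S t j) * mv i j else 0))
        + ∑ i, ∑ j, (if E i j then (S t i - S t j) ^ 2 * thetaA μ i j else 0) := by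
    simp only [Finset.mul_sum, ← Finset.sum_add_distrib]
    refine Finset.sum_congr rfl fun i _ => Finset.sum_congr rfl fun j _ => ?_
    by_cases h : E i j
    · simp only [if_pos h]
      rcases eq_or_ne (thetaA μ i j) 0 with hz | hz
      · rw [hz, hmv i j h hz]; simp
      · field_simp; ring
    · simp [h]
  rw [hpair, hjbExpr, kineticEnergy, kineticEnergy]
  linear_combination hflux + hnoise + (1 / 2) * hnoise' - (1 / 4) * hsquare

theorem pairingRate_le_kineticEnergy (hE : ∀ i j, E i j ↔ E j i) {Sg : Fin N → ℝ}
    {wd : ℝ → ℝ} {S Sd : ℝ → Fin N → ℝ} {t : ℝ} {μ : Fin N → ℝ} {mv : Fin N → Fin N → ℝ}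
    (hμ : ∀ i, 0 ≤ μ i) (hskew : ∀ i j, mv i j = - mv j i) (hmv : FluxSupported E μ mv)
    (hhjb : hjbExpr E Sg wd S Sd μ t ≤ 0) :
    pairingRate E Sg wd S Sd μ mv t ≤ kineticEnergy E μ mv := by
  have := kineticEnergy_sub_pairingRate hE Sg wd S Sd t hskew hmv
  linarith [kineticEnergy_nonneg (E := E) hμ fun i j => mv i j + thetaA μ i j * (S t i - S t j)]

theorem kineticEnergy_eq_pairingRate_iff (hE : ∀ i j, E i j ↔ E j i) {Sg : Fin N → ℝ}
    {wd : ℝ → ℝ} {S Sd : ℝ → Fin N → ℝ} {t : ℝ} {μ : Fin N → ℝ} {mv : Fin N → Fin N → ℝ}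
    (hμ : ∀ i, 0 ≤ μ i) (hskew : ∀ i j, mv i j = - mv j i) (hmv : FluxSupported E μ mv)
    (hhjb : hjbExpr E Sg wd S Sd μ t ≤ 0) :
    kineticEnergy E μ mv = pairingRate E Sg wd S Sd μ mv t
      ↔ (∀ i j, E i j → mv i j = thetaA μ i j * (S t j - S t i))
        ∧ hjbExpr E Sg wd S Sd μ t = 0 := by
  set slack := kineticEnergy E μ fun i j => mv i j + thetaA μ i j * (S t i - S t j)
  have hgap := kineticEnergy_sub_pairingRate hE Sg wd S Sd t hskew hmv
  have hslack : 0 ≤ slack := kineticEnergy_nonneg hμ _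
  have hflux : slack = 0 ↔ ∀ i j, E i j → mv i j = thetaA μ i j * (S t j - S t i) := by
    rw [kineticEnergy_eq_zero_iff hμ]
    refine forall₂_congr fun i j => forall_congr' fun hij => ⟨fun h => ?_, fun h _ => ?_⟩
    · rcases (thetaA_nonneg hμ i j).lt_or_eq with hpos | hzero
      · linear_combination h hpos
      · rw [hmv i j hij hzero.symm, ← hzero, zero_mul]
    · rw [h]; ring
  rw [← hflux]
  constructor
  · intro h; constructor <;> linarith
  · rintro ⟨h1, h2⟩; linarith

theorem lintegrand_action_eq_ofReal_kineticEnergy {μ : Fin N → ℝ} {mv : Fin N → Fin N → ℝ}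
    (hμ : ∀ i, 0 ≤ μ i) (hmv : FluxSupported E μ mv) :
    (1 / 4) * ∑ i, ∑ j, (if E i j then Lcost (thetaA μ i j) (mv i j) else 0)
      = ENNReal.ofReal (kineticEnergy E μ mv) := by
  rw [kineticEnergy, ENNReal.ofReal_mul (by norm_num),
    ENNReal.ofReal_sum_of_nonneg fun i _ =>
      Finset.sum_nonneg fun j _ => kineticEnergy_term_nonneg hμ mv i j]
  congr 1
  · rw [ENNReal.ofReal_div_of_pos four_pos]; simp
  refine Finset.sum_congr rfl fun i _ => ?_
  rw [ENNReal.ofReal_sum_of_nonneg fun j _ => kineticEnergy_term_nonneg hμ mv i j]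
  refine Finset.sum_congr rfl fun j _ => ?_
  split_ifs with hij
  · exact Lcost_eq_ofReal (thetaA_nonneg hμ i j) (hmv i j hij)
  · exact ENNReal.ofReal_zero.symm

end Pointwise

theorem AbsCtsL2.continuousOn_apply {N : ℕ} {S Sd : ℝ → Fin N → ℝ} (hS : AbsCtsL2 S Sd)
    (i : Fin N) : ContinuousOn (fun t => S t i) (Icc 0 1) := by
  obtain ⟨-, hSd, hSeq⟩ := hS
  have hprim := intervalIntegral.continuousOn_primitive_interval' (hSd i) left_mem_uIcc
  rw [uIcc_of_le zero_le_one] at hprim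
  exact (continuousOn_const.add hprim).congr fun t ht => hSeq i t ht

namespace Feasible

variable {N : ℕ} {E : Fin N → Fin N → Prop} [DecidableRel E] {Sg : Fin N → ℝ} {wd : ℝ → ℝ}
  {ρa ρb : Fin N → ℝ} {ρ : ℝ → Fin N → ℝ} {m : ℝ → Fin N → Fin N → ℝ}

theorem ae_nonneg (h : Feasible E Sg wd ρa ρb ρ m) :
    ∀ᵐ t ∂volume.restrict (Icc (0 : ℝ) 1), ∀ i, 0 ≤ ρ t i := by
  obtain ⟨-, hprob, -⟩ := h
  exact (ae_restrict_mem measurableSet_Icc).mono fun t ht => (hprob t ht).1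

theorem flux_skew (h : Feasible E Sg wd ρa ρb ρ m) (t : ℝ) (i j : Fin N) :
    m t i j = - m t j i := by
  obtain ⟨-, -, -, -, hvec, -⟩ := h
  exact (hvec t).1 i j

theorem continuousOn_apply (h : Feasible E Sg wd ρa ρb ρ m) (i : Fin N) :
    ContinuousOn (fun t => ρ t i) (Icc 0 1) :=
  (continuous_apply i).comp_continuousOn h.1

theorem aemeasurable_thetaA (h : Feasible E Sg wd ρa ρb ρ m) (i j : Fin N) :
    AEMeasurable (fun t => thetaA (ρ t) i j) (volume.restrict (Icc 0 1)) :=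
  (((h.continuousOn_apply i).add (h.continuousOn_apply j)).div_const 2).aemeasurable
    measurableSet_Icc

theorem aemeasurable_flux (h : Feasible E Sg wd ρa ρb ρ m) (i j : Fin N) :
    AEMeasurable (fun t => m t i j) (volume.restrict (Icc 0 1)) := by
  obtain ⟨-, -, -, -, -, hL2, -⟩ := h
  exact (hL2 i j).aestronglyMeasurable.aemeasurable

theorem aestronglyMeasurable_kineticEnergy (h : Feasible E Sg wd ρa ρb ρ m) :
    AEStronglyMeasurable (fun t => kineticEnergy E (ρ t) (m t)) (volume.restrict (Icc 0 1)) := by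
  refine (AEMeasurable.const_mul ?_ _).aestronglyMeasurable
  refine Finset.aemeasurable_fun_sum _ fun i _ => Finset.aemeasurable_fun_sum _ fun j _ => ?_
  split_ifs
  exacts [((h.aemeasurable_flux i j).pow_const 2).div (h.aemeasurable_thetaA i j),
    aemeasurable_const]

theorem ae_fluxSupported_of_action_ne_top (h : Feasible E Sg wd ρa ρb ρ m)
    (hA : action E ρ m ≠ ⊤) :
    ∀ᵐ t ∂volume.restrict (Icc (0 : ℝ) 1), FluxSupported E (ρ t) (m t) := by
  have hmeas : AEMeasurable (fun t => (1 / 4) * ∑ i, ∑ j,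
      (if E i j then Lcost (thetaA (ρ t) i j) (m t i j) else 0)) (volume.restrict (Icc 0 1)) := by
    refine AEMeasurable.const_mul ?_ _
    refine Finset.aemeasurable_fun_sum _ fun i _ => Finset.aemeasurable_fun_sum _ fun j _ => ?_
    split_ifs
    exacts [measurable_Lcost.comp_aemeasurable
      ((h.aemeasurable_thetaA i j).prodMk (h.aemeasurable_flux i j)), aemeasurable_const]
  filter_upwards [ae_lt_top' hmeas hA] with t hlt i j hij hzero
  by_contra hm
  refine hlt.ne (ENNReal.mul_eq_top.2 (Or.inl ⟨by norm_num, ?_⟩))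
  refine ENNReal.sum_eq_top.2 ⟨i, Finset.mem_univ i,
    ENNReal.sum_eq_top.2 ⟨j, Finset.mem_univ j, ?_⟩⟩
  rw [if_pos hij, hzero, Lcost_zero_left hm]

theorem action_eq_lintegral_kineticEnergy (h : Feasible E Sg wd ρa ρb ρ m)
    (hm : ∀ᵐ t ∂volume.restrict (Icc (0 : ℝ) 1), FluxSupported E (ρ t) (m t)) :
    action E ρ m = ∫⁻ t in Icc (0 : ℝ) 1, ENNReal.ofReal (kineticEnergy E (ρ t) (m t)) :=
  lintegral_congr_ae <| by
    filter_upwards [h.ae_nonneg, hm] with t hρ hmt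
    exact lintegrand_action_eq_ofReal_kineticEnergy hρ hmt

variable {S Sd : ℝ → Fin N → ℝ}

theorem integrable_pairingRate_term (h : Feasible E Sg wd ρa ρb ρ m) (hS : AbsCtsL2 S Sd)
    (i : Fin N) :
    Integrable (fun t => Sd t i * ρ t i - S t i * netOutflow E Sg (wd t) (ρ t) (m t) i)
      (volume.restrict (Icc 0 1)) := by
  have hIcc {f : ℝ → ℝ} (hf : IntervalIntegrable f volume 0 1) : IntegrableOn f (Icc 0 1) :=
    (intervalIntegrable_iff_integrableOn_Icc_of_le zero_le_one).1 hf
  have hρi := h.continuousOn_apply i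
  obtain ⟨-, -, -, -, -, -, hflux, -⟩ := h
  exact ((hIcc (hS.2.1 i)).mul_continuousOn hρi isCompact_Icc).sub
    (IntegrableOn.continuousOn_mul (hS.continuousOn_apply i) (hIcc (hflux i)) isCompact_Icc)

theorem integral_pairingRate_term (h : Feasible E Sg wd ρa ρb ρ m) (hS : AbsCtsL2 S Sd)
    (i : Fin N) :
    ∫ t in Icc (0 : ℝ) 1, (Sd t i * ρ t i - S t i * netOutflow E Sg (wd t) (ρ t) (m t) i)
      = S 1 i * ρb i - S 0 i * ρa i := by
  obtain ⟨-, -, hρ0, hρ1, -, -, hflux, hρeq⟩ := h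
  obtain ⟨-, hSd, hSeq⟩ := hS
  have hibp := intervalIntegral.integral_mul_add_mul_eq_sub_of_primitive (hSd i) (hflux i).neg
    (U := fun t => S t i) (V := fun t => ρ t i)
    (fun t ht => hSeq i t (by rwa [uIcc_of_le zero_le_one] at ht))
    (fun t ht => by
      rw [hρeq i t (by rwa [uIcc_of_le zero_le_one] at ht), hρ0]
      simp only [Pi.neg_apply, intervalIntegral.integral_neg, sub_eq_add_neg])
  rw [integral_Icc_eq_integral_Ioc, ← intervalIntegral.integral_of_le zero_le_one]
  simpa only [netOutflow, Pi.neg_apply, mul_neg, ← sub_eq_add_neg, hρ0, hρ1] using hibp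

theorem integrable_pairingRate (h : Feasible E Sg wd ρa ρb ρ m) (hS : AbsCtsL2 S Sd) :
    Integrable (fun t => pairingRate E Sg wd S Sd (ρ t) (m t) t) (volume.restrict (Icc 0 1)) :=
  integrable_finsetSum _ fun i _ => h.integrable_pairingRate_term hS i

theorem integral_pairingRate (h : Feasible E Sg wd ρa ρb ρ m) (hS : AbsCtsL2 S Sd) :
    ∫ t in Icc (0 : ℝ) 1, pairingRate E Sg wd S Sd (ρ t) (m t) t
      = ∑ i, S 1 i * ρb i - ∑ i, S 0 i * ρa i := by
  rw [← Finset.sum_sub_distrib, ← Finset.sum_congr rfl fun i _ => h.integral_pairingRate_term hS i]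
  exact integral_finsetSum _ fun i _ => h.integrable_pairingRate_term hS i

end Feasible

theorem weak_duality_ii_general
    (N : ℕ) (E : Fin N → Fin N → Prop) [DecidableRel E]
    (hEsymm : ∀ i j, E i j ↔ E j i)
    (Sg : Fin N → ℝ) (wd : ℝ → ℝ)
    (ρa ρb : Fin N → ℝ)
    (ρ : ℝ → Fin N → ℝ) (m : ℝ → Fin N → Fin N → ℝ)
    (hfeas : Feasible E Sg wd ρa ρb ρ m)
    (S Sd : ℝ → Fin N → ℝ) (hS : AbsCtsL2 S Sd)
    (hhjb : ∀ᵐ t ∂(volume.restrict (Set.Icc (0 : ℝ) 1)),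
      hjbExpr E Sg wd S Sd (ρ t) t ≤ 0) :
    (action E ρ m ≠ ⊤ ∧
        (action E ρ m).toReal = (∑ i, S 1 i * ρb i) - ∑ i, S 0 i * ρa i)
      ↔ (∀ᵐ t ∂(volume.restrict (Set.Icc (0 : ℝ) 1)),
          (∀ i j, E i j → m t i j = thetaA (ρ t) i j * (S t j - S t i)) ∧
          hjbExpr E Sg wd S Sd (ρ t) t = 0) := by
  by_cases hm : ∀ᵐ t ∂volume.restrict (Icc (0 : ℝ) 1), FluxSupported E (ρ t) (m t)
  · have hle : ∀ᵐ t ∂volume.restrict (Icc (0 : ℝ) 1),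
        pairingRate E Sg wd S Sd (ρ t) (m t) t ≤ kineticEnergy E (ρ t) (m t) := by
      filter_upwards [hfeas.ae_nonneg, hm, hhjb] with t hρ hmt hjb
      exact pairingRate_le_kineticEnergy hEsymm hρ (hfeas.flux_skew t) hmt hjb
    rw [hfeas.action_eq_lintegral_kineticEnergy hm, ← hfeas.integral_pairingRate hS,
      lintegral_ofReal_ne_top_and_toReal_eq_integral_iff hfeas.aestronglyMeasurable_kineticEnergy
        (hfeas.ae_nonneg.mono fun t hρ => kineticEnergy_nonneg hρ _)
        (hfeas.integrable_pairingRate hS) hle]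
    refine Filter.eventually_congr ?_
    filter_upwards [hfeas.ae_nonneg, hm, hhjb] with t hρ hmt hjb
    exact kineticEnergy_eq_pairingRate_iff hEsymm hρ (hfeas.flux_skew t) hmt hjb
  · refine iff_of_false (fun h => hm (hfeas.ae_fluxSupported_of_action_ne_top h.1)) fun h => hm ?_
    filter_upwards [h] with t ht using FluxSupported.of_eq_thetaA_mul ht.1

/-- Weak duality, part (ii): in the setting of weak duality, equality
`⟨S(1),ρ^b⟩ − ⟨S(0),ρ^a⟩ = A(ρ,m)` holds if and only if for a.e. `t`,
`m_ij = θ_ij(ρ)(S_j − S_i)` on every edge and the Hamilton–Jacobi expression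
vanishes along `ρ`. -/
theorem weak_duality_ii
    (N : ℕ) (hN : 2 ≤ N) (E : Fin N → Fin N → Prop) [DecidableRel E]
    (hEsymm : ∀ i j, E i j ↔ E j i) (hEirr : ∀ i, ¬ E i i)
    (hconn : ∀ i j : Fin N, Relation.ReflTransGen (fun a b => E a b) i j)
    (Sg : Fin N → ℝ) (w wd : ℝ → ℝ) (hw : IsPWL w wd)
    (ρa ρb : Fin N → ℝ) (hρa : ProbVec ρa) (hρb : ProbVec ρb)
    (ρ : ℝ → Fin N → ℝ) (m : ℝ → Fin N → Fin N → ℝ)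
    (hfeas : Feasible E Sg wd ρa ρb ρ m)
    (S Sd : ℝ → Fin N → ℝ) (hS : AbsCtsL2 S Sd)
    (hhjb : ∀ᵐ t ∂(volume.restrict (Set.Icc (0 : ℝ) 1)),
      hjbExpr E Sg wd S Sd (ρ t) t ≤ 0) :
    (action E ρ m ≠ ⊤ ∧
        (action E ρ m).toReal = (∑ i, S 1 i * ρb i) - ∑ i, S 0 i * ρa i)
      ↔ (∀ᵐ t ∂(volume.restrict (Set.Icc (0 : ℝ) 1)),
          (∀ i j, E i j → m t i j = thetaA (ρ t) i j * (S t j - S t i)) ∧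
          hjbExpr E Sg wd S Sd (ρ t) t = 0) :=
  weak_duality_ii_general N E hEsymm Sg wd ρa ρb ρ m hfeas S Sd hS hhjb

end
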